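/- If n is an integer with n ≡ 1 or -1 (mod 9), then 16n^2 - 1 ≡ -3 · α^2 for some α ∈ 1 + 3ℤ₃; equivalently, (16n^2 - 1)/(-3) is a square in ℤ₃ congruent to 1 mod 3. Consequently the point (-1, √(16n^2 - 1)) lies in E_{16n^2}(ℚ₃(ζ₃)). -/

import Mathlib

/-- The Weierstrass curve `y² = x³ + a` over a field `F`. -/
noncomputable def mordellCurve (F : Type*) [Field F] (a : F) : WeierstrassCurve F :=
  ⟨0, 0, 0, 0, a⟩

lemma sqrt_in_padic (c : ℤ_[3]) (hc : (3 : ℤ_[3]) ∣ (c - 1)) :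
    ∃ z : ℤ_[3], z ^ 2 = c ∧ (3 : ℤ_[3]) ∣ (z - 1) := by
  set F : Polynomial ℤ_[3] := Polynomial.X ^ 2 - Polynomial.C c with hF
  have heval : F.eval 1 = 1 - c := by simp [hF]
  have hderiv1 : F.derivative.eval 1 = 2 := by
    simp [hF]
    norm_num
  have h2 : ‖(2 : ℤ_[3])‖ = 1 := by
    have hle : ‖(2 : ℤ_[3])‖ ≤ 1 := PadicInt.norm_le_one _
    have : ¬ ‖((2 : ℤ) : ℤ_[3])‖ < 1 := by
      rw [PadicInt.norm_int_lt_one_iff_dvd]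
      decide
    push_cast at this
    linarith [lt_or_eq_of_le hle |>.resolve_left this]
  have hc' : ((3 : ℕ) : ℤ_[3]) ∣ (c - 1) := by exact_mod_cast hc
  have hnc : ‖c - 1‖ < 1 := (PadicInt.norm_lt_one_iff_dvd _).mpr hc'
  have hlt : ‖F.eval 1‖ < ‖F.derivative.eval 1‖ ^ 2 := by
    rw [heval, hderiv1, h2, one_pow, norm_sub_rev]
    exact hnc
  obtain ⟨z, hz, hzdist, -, -⟩ := hensels_lemma hlt
  refine ⟨z, ?_, ?_⟩
  · have : z ^ 2 - c = 0 := by simpa [hF] using hz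
    linear_combination this
  · rw [Polynomial.coe_aeval_eq_eval, hderiv1, h2] at hzdist
    have := (PadicInt.norm_lt_one_iff_dvd _).mp hzdist
    exact_mod_cast this

/-- If `n ≡ ±1 (mod 9)` then `16n² - 1 = -3α²` for some `α ∈ 1 + 3ℤ₃`, and consequently
the point `(-1, √(16n² - 1))` lies on `E_{16n²} : y² = x³ + 16n²` over `ℚ₃(ζ₃)`. -/
theorem sixteen_n_sq_sub_one (n : ℤ) (hn : n % 9 = 1 ∨ n % 9 = 8) :
    (∃ α : ℤ_[3], (∃ β : ℤ_[3], α = 1 + 3 * β) ∧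
      (16 * (n : ℤ_[3]) ^ 2 - 1) = -3 * α ^ 2) ∧
    ∃ y : CyclotomicField 3 ℚ_[3],
      y ^ 2 = 16 * (n : CyclotomicField 3 ℚ_[3]) ^ 2 - 1 ∧
      (mordellCurve (CyclotomicField 3 ℚ_[3])
        (16 * (n : CyclotomicField 3 ℚ_[3]) ^ 2)).toAffine.Equation (-1) y := by
  -- find integer m with 1 - 16n² = 3m and m ≡ 1 mod 3
  obtain ⟨m, hm, hm3⟩ : ∃ m : ℤ, 1 - 16 * n ^ 2 = 3 * m ∧ m % 3 = 1 := by
    obtain ⟨k, hk⟩ : ∃ k, n = 9 * k + (n % 9) := ⟨n / 9, by omega⟩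
    rcases hn with h | h <;> rw [h] at hk
    · exact ⟨-432 * k ^ 2 - 96 * k - 5, by rw [hk]; ring, by omega⟩
    · exact ⟨-432 * k ^ 2 - 768 * k - 341, by rw [hk]; ring, by omega⟩
  have hc : (3 : ℤ_[3]) ∣ ((m : ℤ_[3]) - 1) := by
    obtain ⟨j, hj⟩ : (3 : ℤ) ∣ (m - 1) := by omega
    refine ⟨(j : ℤ_[3]), ?_⟩
    have : ((m - 1 : ℤ) : ℤ_[3]) = ((3 * j : ℤ) : ℤ_[3]) := by rw [hj]
    push_cast at this
    linear_combination this
  obtain ⟨z, hz2, hzd⟩ := sqrt_in_padic (m : ℤ_[3]) hc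
  have hmz : ((1 - 16 * n ^ 2 : ℤ) : ℤ_[3]) = ((3 * m : ℤ) : ℤ_[3]) := by rw [hm]
  have key : (16 * (n : ℤ_[3]) ^ 2 - 1) = -3 * z ^ 2 := by
    push_cast at hmz
    linear_combination -hmz + 3 * hz2
  constructor
  · obtain ⟨β, hβ⟩ := hzd
    exact ⟨z, ⟨β, by linear_combination hβ⟩, key⟩
  · -- second part
    set K := CyclotomicField 3 ℚ_[3]
    have : IsCyclotomicExtension {3} ℚ_[3] K := CyclotomicField.isCyclotomicExtension 3 ℚ_[3]
    have hζ := IsCyclotomicExtension.zeta_spec 3 ℚ_[3] K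
    set ζ := IsCyclotomicExtension.zeta 3 ℚ_[3] K
    have hζ3 : ζ ^ 3 = 1 := hζ.pow_eq_one
    have hζ1 : ζ ≠ 1 := hζ.ne_one (by norm_num)
    have hsum : ζ ^ 2 + ζ + 1 = 0 := by
      have h0 : (ζ - 1) * (ζ ^ 2 + ζ + 1) = 0 := by linear_combination hζ3
      rcases mul_eq_zero.mp h0 with h | h
      · exact absurd (sub_eq_zero.mp h) hζ1
      · exact h
    have hsq : (2 * ζ + 1) ^ 2 = -3 := by linear_combination 4 * hsum
    set f : ℤ_[3] →+* K := (algebraMap ℚ_[3] K).comp (PadicInt.Coe.ringHom) with hf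
    have hfn : f ((n : ℤ_[3])) = (n : K) := map_intCast f n
    have hkey : 16 * (n : K) ^ 2 - 1 = -3 * (f z) ^ 2 := by
      have h1 := congrArg f key
      rw [map_sub, map_mul, map_mul, map_pow, map_pow, map_one, map_neg, hfn] at h1
      have h16 : f 16 = 16 := map_ofNat f 16
      have h3 : f 3 = 3 := map_ofNat f 3
      rw [h16, h3] at h1
      exact h1
    have hy : ((2 * ζ + 1) * f z) ^ 2 = 16 * (n : K) ^ 2 - 1 := by
      rw [mul_pow, hsq, hkey]
    refine ⟨(2 * ζ + 1) * f z, hy, ?_⟩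
    rw [WeierstrassCurve.Affine.equation_iff]
    simp only [mordellCurve]
    rw [hy]
    ring
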